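/- arXiv:math/0607431 — 3 statements merged into one kernel-verified Lean document; each statement's English description precedes it below -/
import Mathlib

section
/- For variables a₁,…,a_m in a commutative ring with ∏_{i=1}^m a_i = 0, and any polynomial P over the ring, one has ∑_{l=0}^m (-1)^l ∑_{S ⊆ {1,…,m}, |S|=l} P(∑_{j∉S} a_j) = 0. -/
/-!
Write `Δ_r P = P(X + r) - P` for the forward difference with step `r`. The alternating sum is the
value at `0` of the mixed difference `Δ_{a 1} ⋯ Δ_{a m} P`. Each `Δ_r P` is `r` times a polynomial,
and the differences commute with scalar multiplication, so the mixed difference is divisible by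
`a 1 ⋯ a m = 0`.
-/

open Finset Polynomial

namespace Polynomial

variable {R ι : Type*} [CommRing R] [DecidableEq ι]

theorem C_dvd_taylor_sub (r : R) (P : R[X]) : C r ∣ taylor r P - P := by
  have h := sub_dvd_eval_sub (X + C r) X (P.map C)
  rwa [add_sub_cancel_left, eval_map, eval_map, ← comp, ← comp, comp_X] at h

/-- The mixed forward difference `Δ_{a i₁} ⋯ Δ_{a iₖ} P` for `s = {i₁, …, iₖ}`, expanded. -/
noncomputable def mixedFwdDiff (a : ι → R) (s : Finset ι) (P : R[X]) : R[X] :=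
  ∑ T ∈ s.powerset, (-1) ^ #T * taylor (∑ j ∈ s \ T, a j) P

variable (a : ι → R)

theorem mixedFwdDiff_C_mul (s : Finset ι) (c : R) (P : R[X]) :
    mixedFwdDiff a s (C c * P) = C c * mixedFwdDiff a s P := by
  simp only [mixedFwdDiff, mul_sum, ← smul_eq_C_mul, map_smul, mul_smul_comm]

theorem mixedFwdDiff_insert {i : ι} {s : Finset ι} (hi : i ∉ s) (P : R[X]) :
    mixedFwdDiff a (insert i s) P = mixedFwdDiff a s (taylor (a i) P - P) := by
  rw [mixedFwdDiff, sum_powerset_insert hi, ← sum_add_distrib, mixedFwdDiff]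
  refine sum_congr rfl fun T hT => ?_
  have hiT : i ∉ T := fun h => hi (mem_powerset.1 hT h)
  have hiST : i ∉ s \ T := fun h => hi (mem_sdiff.1 h).1
  rw [insert_sdiff_of_notMem _ hiT, sum_insert hiST, insert_sdiff_insert,
    sdiff_insert_of_notMem hi, card_insert_of_notMem hiT, add_comm (a i), ← taylor_taylor,
    map_sub]
  ring

theorem C_prod_dvd_mixedFwdDiff (s : Finset ι) (P : R[X]) :
    C (∏ i ∈ s, a i) ∣ mixedFwdDiff a s P := by
  induction s using Finset.induction_on generalizing P with
  | empty => simp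
  | insert i s hi ih =>
    obtain ⟨Q, hQ⟩ := C_dvd_taylor_sub (a i) P
    rw [mixedFwdDiff_insert a hi, hQ, mixedFwdDiff_C_mul, prod_insert hi, C_mul]
    exact mul_dvd_mul_left _ (ih Q)

theorem eval_zero_mixedFwdDiff (s : Finset ι) (P : R[X]) :
    (mixedFwdDiff a s P).eval 0 =
      ∑ l ∈ range (#s + 1), (-1) ^ l * ∑ T ∈ powersetCard l s, P.eval (∑ j ∈ s \ T, a j) := by
  simp only [mixedFwdDiff, eval_finsetSum, eval_mul, eval_pow, eval_neg, eval_one, taylor_eval,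
    zero_add, sum_powerset, mul_sum]
  refine sum_congr rfl fun l _ => sum_congr rfl fun T hT => ?_
  rw [(mem_powersetCard.1 hT).2]

end Polynomial

/-- Inclusion–exclusion observation (*) of Example 3.5: if the product of
`a 1, …, a m` is zero in a commutative ring, then for any polynomial `P`,
`∑_{l=0}^m (-1)^l ∑_{|S|=l} P(∑_{j∉S} a j) = 0`. -/
theorem statement_0 {R : Type*} [CommRing R] (m : ℕ) (a : Fin m → R)
    (hprod : ∏ i, a i = 0) (P : Polynomial R) :
    ∑ l ∈ Finset.range (m + 1), (-1 : R) ^ l *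
      ∑ S ∈ Finset.powersetCard l (Finset.univ : Finset (Fin m)),
        P.eval (∑ j ∈ Finset.univ \ S, a j) = 0 := by
  have hdvd := C_prod_dvd_mixedFwdDiff a univ P
  rw [hprod, C_0, zero_dvd_iff] at hdvd
  simpa [hdvd] using (eval_zero_mixedFwdDiff a univ P).symm
end

section
/- Let R be a commutative ring and b, ψ, D₁, D₂, t, k ∈ R with ψ·D₁·D₂ = 0, t = 2b - D₁ - D₂, and k = b² - b(D₁+D₂) + D₁D₂ - (ψ - D₁ - D₂)ψ. Define a_l = (b-D₁)^l + (b-D₂)^l + (b+ψ-D₁-D₂)^l + (b-ψ)^l - b^l - (b-D₁-D₂)^l. Then for all l ≥ 0, a_{l+2} - t·a_{l+1} + k·a_l = 0. -/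
/-- `x*y` divides `z^l + (z+x+y)^l - (z+x)^l - (z+y)^l`. -/
lemma aux_xy_dvd {R : Type*} [CommRing R] (x y z : R) :
    ∀ l : ℕ, x * y ∣ (z ^ l + (z + x + y) ^ l - (z + x) ^ l - (z + y) ^ l) := by
  intro l
  induction l using Nat.twoStepInduction with
  | zero => exact ⟨0, by ring⟩
  | one => exact ⟨0, by ring⟩
  | more l ih1 ih0 =>
    obtain ⟨m, hm⟩ := ih0
    obtain ⟨n, hn⟩ := ih1
    exact ⟨(2 * z + x + y) * m - (z + x) * (z + y) * n + (z ^ l + (z + x + y) ^ l),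
      by linear_combination (2 * z + x + y) * hm - (z + x) * (z + y) * hn⟩

/-- The recurrence `a_{l+2} - t a_{l+1} + k a_l = 0` of Example 3.5. -/
theorem statement_1 {R : Type*} [CommRing R] (b ψ D₁ D₂ t k : R) (a : ℕ → R)
    (hψ : ψ * D₁ * D₂ = 0)
    (ht : t = 2 * b - D₁ - D₂)
    (hk : k = b ^ 2 - b * (D₁ + D₂) + D₁ * D₂ - (ψ - D₁ - D₂) * ψ)
    (ha : ∀ l : ℕ, a l = (b - D₁) ^ l + (b - D₂) ^ l + (b + ψ - D₁ - D₂) ^ l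
      + (b - ψ) ^ l - b ^ l - (b - D₁ - D₂) ^ l) :
    ∀ l : ℕ, a (l + 2) - t * a (l + 1) + k * a l = 0 := by
  intro l
  obtain ⟨m₁, hm₁⟩ : D₁ * D₂ ∣ ((b - D₁ - D₂) ^ l + b ^ l - (b - D₂) ^ l - (b - D₁) ^ l) := by
    have h := aux_xy_dvd D₁ D₂ (b - D₁ - D₂) l
    convert h using 2 <;> ring_nf
  obtain ⟨m₂, hm₂⟩ : ψ ∣ ((b + ψ - D₁ - D₂) ^ l - (b - D₁ - D₂) ^ l) := by
    have h := sub_dvd_pow_sub_pow (b + ψ - D₁ - D₂) (b - D₁ - D₂) l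
    have e : (b + ψ - D₁ - D₂) - (b - D₁ - D₂) = ψ := by ring
    rwa [e] at h
  obtain ⟨m₃, hm₃⟩ : ψ ∣ ((b - ψ) ^ l - b ^ l) := by
    have h := sub_dvd_pow_sub_pow (b - ψ) b l
    have e : (b - ψ) - b = -ψ := by ring
    rw [e] at h
    exact (dvd_neg.mpr dvd_rfl).trans h
  rw [ha, ha, ha, ht, hk]
  linear_combination ((ψ - D₁ - D₂) * ψ) * hm₁ + (D₁ * D₂) * hm₂ + (D₁ * D₂) * hm₃
    + ((ψ - D₁ - D₂) * m₁ + m₂ + m₃) * hψ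
end

section
/- In a commutative ring R, suppose ψ, D₁, D₂, H satisfy D₁D₂ψ = 0 and let b = H + ψ. Then for every l ≥ 0, (b+ψ-D₁)^l + (b+ψ-D₂)^l - (b+ψ)^l + (b-ψ)^l = (b-D₁)^l + (b-D₂)^l + (b+ψ-D₁-D₂)^l + (b-ψ)^l - b^l - (b-D₁-D₂)^l. -/
/-- Inclusion–exclusion: `D₁ D₂` divides the alternating sum of `m`-th powers. -/
lemma key_dvd {R : Type*} [CommRing R] (D₁ D₂ b : R) (m : ℕ) :
    D₁ * D₂ ∣ ((b - D₁) ^ m + (b - D₂) ^ m - b ^ m - (b - D₁ - D₂) ^ m) := by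
  induction m using Nat.twoStepInduction with
  | zero => simp
  | one => exact ⟨0, by ring⟩
  | more m ih1 ih2 =>
    obtain ⟨c, hc⟩ := ih1
    obtain ⟨d, hd⟩ := ih2
    refine ⟨(2 * b - D₁ - D₂) * d - (b - D₁) * (b - D₂) * c
      - (b ^ m + (b - D₁ - D₂) ^ m), ?_⟩
    linear_combination (2 * b - D₁ - D₂) * hd - (b - D₁) * (b - D₂) * hc

/-- `D₁ D₂ ψ` divides the difference of the alternating sums at `b + ψ` and `b`. -/
lemma shift_dvd {R : Type*} [CommRing R] (D₁ D₂ ψ b : R) (m : ℕ) :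
    D₁ * D₂ * ψ ∣
      (((b + ψ - D₁) ^ m + (b + ψ - D₂) ^ m - (b + ψ) ^ m - (b + ψ - D₁ - D₂) ^ m)
        - ((b - D₁) ^ m + (b - D₂) ^ m - b ^ m - (b - D₁ - D₂) ^ m)) := by
  induction m using Nat.twoStepInduction with
  | zero => simp
  | one =>
    refine ⟨0, ?_⟩
    ring
  | more m ih1 ih2 =>
    obtain ⟨x, hx⟩ := ih1
    obtain ⟨y, hy⟩ := ih2
    obtain ⟨k0, hk0⟩ := key_dvd D₁ D₂ (b + ψ) m
    obtain ⟨k1, hk1⟩ := key_dvd D₁ D₂ (b + ψ) (m + 1)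
    obtain ⟨g, hg⟩ : ψ ∣ (b + ψ) ^ m - b ^ m := by
      simpa using sub_dvd_pow_sub_pow (b + ψ) b m
    obtain ⟨h, hh⟩ : ψ ∣ (b + ψ - D₁ - D₂) ^ m - (b - D₁ - D₂) ^ m := by
      simpa using sub_dvd_pow_sub_pow (b + ψ - D₁ - D₂) (b - D₁ - D₂) m
    refine ⟨(2 * b - D₁ - D₂) * y - (b - D₁) * (b - D₂) * x + 2 * k1
      - (2 * b + ψ - D₁ - D₂) * k0 - g - h, ?_⟩
    linear_combination (2 * b - D₁ - D₂) * hy - (b - D₁) * (b - D₂) * hx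
      + 2 * ψ * hk1 - ψ * (2 * b + ψ - D₁ - D₂) * hk0
      - D₁ * D₂ * hg - D₁ * D₂ * hh

/-- Invariant rewriting of the coefficients `a_l` in Example 3.5, using
`D₁ D₂ ψ = 0`. -/
theorem statement_4 {R : Type*} [CommRing R] (ψ D₁ D₂ H b : R)
    (hψ : D₁ * D₂ * ψ = 0) (hb : b = H + ψ) :
    ∀ l : ℕ,
      (b + ψ - D₁) ^ l + (b + ψ - D₂) ^ l - (b + ψ) ^ l + (b - ψ) ^ l =
      (b - D₁) ^ l + (b - D₂) ^ l + (b + ψ - D₁ - D₂) ^ l + (b - ψ) ^ l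
        - b ^ l - (b - D₁ - D₂) ^ l := by
  intro l
  obtain ⟨c, hc⟩ := shift_dvd D₁ D₂ ψ b l
  linear_combination hc + c * hψ
end
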